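/- Let μ be a finite Borel measure on the unit circle 𝕌 and let f ∈ C_c^∞(𝔻∖{0}) be real-valued. Then ∫_𝔻 (D_μ f)(z) · log|z| dλ(z) = −2π ∫_𝕌 (H*f)(w) dμ(w). -/

import Mathlib

noncomputable section

open MeasureTheory

/-- The open unit disk in `ℂ`. -/
def unitDisk : Set ℂ := Metric.ball 0 1

/-- The unit circle in `ℂ`. -/
def unitCircle : Set ℂ := Metric.sphere 0 1

/-- The Wirtinger derivative `∂_z g = ½ (∂_x g − i ∂_y g)`. -/
def wirtinger (g : ℂ → ℂ) (z : ℂ) : ℂ :=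
  (1 / 2) * (fderiv ℝ g z 1 - Complex.I * fderiv ℝ g z Complex.I)

/-- `D_μ f (z) = −2 ∫_𝕌 Re(∂_z( z (z+w)/(z−w) f(z) )) dμ(w)`. -/
def Dmu (μ : Measure ℂ) (f : ℂ → ℝ) (z : ℂ) : ℝ :=
  -2 * ∫ w, (wirtinger (fun ζ => ζ * ((ζ + w) / (ζ - w)) * (f ζ : ℂ)) z).re ∂μ

/-- `(H*f)(w) = (1/2π) ∫_𝔻 Re((w+z)/(w−z)) f(z) dλ(z)`, the adjoint of the Poisson operator. -/
def Hstar (f : ℂ → ℝ) (w : ℂ) : ℝ :=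
  (1 / (2 * Real.pi)) * ∫ z in unitDisk, ((w + z) / (w - z)).re * f z

/-! ### Auxiliary lemmas -/

section Aux

open Complex

lemma wirtinger_congr_zero {g : ℂ → ℂ} {z : ℂ} (h : ∀ᶠ ζ in nhds z, g ζ = 0) :
    wirtinger g z = 0 := by
  have h' : g =ᶠ[nhds z] (fun _ => (0 : ℂ)) := h
  unfold wirtinger
  rw [h'.fderiv_eq]
  simp

lemma wirtinger_of_hasDerivAt {g : ℂ → ℂ} {c z : ℂ} (h : HasDerivAt g c z) :
    wirtinger g z = c := by
  have hF : HasFDerivAt g ((ContinuousLinearMap.smulRight (1 : ℂ →L[ℂ] ℂ) c).restrictScalars ℝ) z :=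
    h.hasFDerivAt.restrictScalars ℝ
  unfold wirtinger
  rw [hF.fderiv]
  simp [ContinuousLinearMap.smulRight_apply, smul_eq_mul]
  ring_nf
  simp [Complex.I_sq]
  ring

lemma wirtinger_mul {u v : ℂ → ℂ} {z : ℂ} (hu : DifferentiableAt ℝ u z)
    (hv : DifferentiableAt ℝ v z) :
    wirtinger (fun ζ => u ζ * v ζ) z = wirtinger u z * v z + u z * wirtinger v z := by
  unfold wirtinger
  rw [fderiv_fun_mul hu hv]
  simp [ContinuousLinearMap.add_apply, ContinuousLinearMap.smul_apply, smul_eq_mul]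
  ring

/-- the function `z ↦ log |z|` as a complex-valued function -/
def Lc (z : ℂ) : ℂ := (Real.log (‖z‖) : ℂ)

lemma hasFDerivAt_logAbs {z : ℂ} (hz : z ≠ 0) :
    HasFDerivAt (fun ζ : ℂ => Real.log (‖ζ‖))
      ((Complex.normSq z)⁻¹ • (z.re • Complex.reCLM + z.im • Complex.imCLM)) z := by
  have hre : HasFDerivAt (fun ζ : ℂ => ζ.re) (Complex.reCLM : ℂ →L[ℝ] ℝ) z :=
    Complex.reCLM.hasFDerivAt
  have him : HasFDerivAt (fun ζ : ℂ => ζ.im) (Complex.imCLM : ℂ →L[ℝ] ℝ) z :=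
    Complex.imCLM.hasFDerivAt
  have h1 : HasFDerivAt Complex.normSq
      ((2 * z.re) • Complex.reCLM + (2 * z.im) • Complex.imCLM) z := by
    have h := (hre.mul hre).add (him.mul him)
    have he : ((((fun ζ : ℂ => ζ.re) * fun ζ => ζ.re) + (fun ζ : ℂ => ζ.im) * fun ζ => ζ.im : ℂ → ℝ) = (⇑Complex.normSq : ℂ → ℝ)) := by
      funext ζ; simp [Complex.normSq_apply]
    rw [he] at h
    refine h.congr_fderiv ?_
    ext v <;> simp <;> ring
  have hns : Complex.normSq z ≠ 0 := by simpa using hz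
  have h2 := (Real.hasDerivAt_log hns).comp_hasFDerivAt z h1
  have h3 := h2.const_smul ((2 : ℝ)⁻¹)
  have he2 : ((2 : ℝ)⁻¹ • (Real.log ∘ Complex.normSq))
      = fun ζ : ℂ => Real.log (‖ζ‖) := by
    funext ζ
    simp only [Pi.smul_apply, Function.comp_apply, smul_eq_mul]
    rw [Complex.norm_def, Real.log_sqrt (Complex.normSq_nonneg ζ)]
    ring
  rw [he2] at h3
  refine h3.congr_fderiv ?_
  ext v <;> simp <;> field_simp <;> ring

lemma contDiffAt_logAbs {z : ℂ} (hz : z ≠ 0) :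
    ContDiffAt ℝ (⊤ : ℕ∞) (fun ζ : ℂ => Real.log (‖ζ‖)) z := by
  have h1 : ContDiffAt ℝ (⊤ : ℕ∞) (fun ζ : ℂ => Real.log (Complex.normSq ζ) / 2) z := by
    have hns : Complex.normSq z ≠ 0 := by simpa using hz
    have hnsq : ContDiff ℝ (⊤ : ℕ∞) (fun ζ : ℂ => Complex.normSq ζ) := by
      have he : (fun ζ : ℂ => Complex.normSq ζ) = fun ζ : ℂ => ζ.re * ζ.re + ζ.im * ζ.im := by
        funext ζ; simp [Complex.normSq_apply]
      rw [he]
      exact (Complex.reCLM.contDiff.mul Complex.reCLM.contDiff).add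
        (Complex.imCLM.contDiff.mul Complex.imCLM.contDiff)
    exact ((Real.contDiffAt_log.mpr hns).comp z hnsq.contDiffAt).div_const 2
  apply h1.congr_of_eventuallyEq
  filter_upwards with ζ
  rw [Complex.norm_def, Real.log_sqrt (Complex.normSq_nonneg ζ)]

lemma contDiffAt_Lc {z : ℂ} (hz : z ≠ 0) : ContDiffAt ℝ (⊤ : ℕ∞) Lc z :=
  Complex.ofRealCLM.contDiff.contDiffAt.comp z (contDiffAt_logAbs hz)

lemma differentiableAt_Lc {z : ℂ} (hz : z ≠ 0) : DifferentiableAt ℝ Lc z :=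
  (Complex.ofRealCLM.hasFDerivAt.comp z (hasFDerivAt_logAbs hz)).differentiableAt

lemma wirtinger_Lc {z : ℂ} (hz : z ≠ 0) : wirtinger Lc z = (2 * z)⁻¹ := by
  have h' : HasFDerivAt Lc
      (Complex.ofRealCLM.comp
        ((Complex.normSq z)⁻¹ • (z.re • Complex.reCLM + z.im • Complex.imCLM))) z :=
    Complex.ofRealCLM.hasFDerivAt.comp z (hasFDerivAt_logAbs hz)
  unfold wirtinger
  rw [h'.fderiv]
  have hns : Complex.normSq z ≠ 0 := by simpa using hz
  have h2z : (2 : ℂ) * z ≠ 0 := by simp [hz]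
  have hnsC : ((Complex.normSq z : ℝ) : ℂ) ≠ 0 := by simpa using hns
  have key : ((z.re : ℂ) - Complex.I * z.im) * z = ((Complex.normSq z : ℝ) : ℂ) := by
    have hc : (z.re : ℂ) - Complex.I * z.im = (starRingEnd ℂ) z := by
      apply Complex.ext <;> simp
    rw [hc, mul_comm, Complex.mul_conj]
  simp only [ContinuousLinearMap.coe_comp', Function.comp_apply,
    ContinuousLinearMap.smul_apply, ContinuousLinearMap.add_apply,
    Complex.reCLM_apply, Complex.imCLM_apply, Complex.ofRealCLM_apply,
    Complex.one_re, Complex.one_im, Complex.I_re, Complex.I_im, smul_eq_mul]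
  push_cast
  rw [inv_eq_one_div (2 * z), eq_div_iff h2z]
  field_simp
  linear_combination key

lemma integral_fderiv_apply_eq_zero {G : ℂ → ℂ} (hG : ContDiff ℝ 1 G)
    (hGc : HasCompactSupport G) (v : ℂ) : ∫ z, fderiv ℝ G z v = 0 := by
  have hcont : Continuous fun z => fderiv ℝ G z v :=
    (hG.continuous_fderiv one_ne_zero).clm_apply continuous_const
  have hint : Integrable (fun z => fderiv ℝ G z v) volume :=
    hcont.integrable_of_hasCompactSupport (hGc.fderiv_apply ℝ v)
  have h := integral_mul_fderiv_eq_neg_fderiv_mul_of_integrable (μ := volume)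
      (f := fun _ : ℂ => (1 : ℂ)) (g := G) (v := v)
      (by simpa [fderiv_const] using (integrable_zero ℂ ℂ volume))
      (by simpa using hint)
      (by simpa using hG.continuous.integrable_of_hasCompactSupport hGc)
      (fun x _ => differentiableAt_const _) (fun x _ => hG.differentiable one_ne_zero x)
  simpa [fderiv_const] using h

lemma integral_wirtinger_eq_zero {G : ℂ → ℂ} (hG : ContDiff ℝ 1 G)
    (hGc : HasCompactSupport G) : ∫ z, wirtinger G z = 0 := by
  have h1 := integral_fderiv_apply_eq_zero hG hGc 1
  have hI := integral_fderiv_apply_eq_zero hG hGc Complex.I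
  have hi1 : Integrable (fun z => fderiv ℝ G z 1) volume :=
    (((hG.continuous_fderiv one_ne_zero).clm_apply continuous_const).integrable_of_hasCompactSupport
      (hGc.fderiv_apply ℝ 1))
  have hiI : Integrable (fun z => fderiv ℝ G z Complex.I) volume :=
    (((hG.continuous_fderiv one_ne_zero).clm_apply continuous_const).integrable_of_hasCompactSupport
      (hGc.fderiv_apply ℝ Complex.I))
  unfold wirtinger
  rw [MeasureTheory.integral_const_mul, integral_sub hi1 (hiI.const_mul _),
    MeasureTheory.integral_const_mul, h1, hI]
  simp

end Aux

section MainAux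

open Complex

variable (f : ℂ → ℝ)

/-- wirtinger derivative of (the complexification of) `f` -/
def Wc (z : ℂ) : ℂ := wirtinger (fun ζ => (f ζ : ℂ)) z

/-- explicit formula for the wirtinger derivative of `ζ ↦ ζ (ζ+w)/(ζ-w) f(ζ)` -/
def Fk (z w : ℂ) : ℂ :=
  (z ^ 2 - 2 * w * z - w ^ 2) / (z - w) ^ 2 * (f z : ℂ) + z * ((z + w) / (z - w)) * Wc f z

variable {f}

lemma Wc_zero {z : ℂ} (hz : z ∉ tsupport f) : Wc f z = 0 := by
  apply wirtinger_congr_zero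
  filter_upwards [(isOpen_compl_iff.2 (isClosed_tsupport f)).mem_nhds hz] with ζ hζ
  simp [image_eq_zero_of_notMem_tsupport hζ]

lemma Fk_zero {z w : ℂ} (hz : z ∉ tsupport f) : Fk f z w = 0 := by
  simp [Fk, Wc_zero hz, image_eq_zero_of_notMem_tsupport hz]

lemma Wc_continuous (hf : ContDiff ℝ (⊤ : ℕ∞) f) : Continuous (Wc f) := by
  have h : ContDiff ℝ (⊤ : ℕ∞) (fun ζ : ℂ => (f ζ : ℂ)) :=
    Complex.ofRealCLM.contDiff.comp hf
  have hfd : Continuous (fun z => fderiv ℝ (fun ζ : ℂ => (f ζ : ℂ)) z) :=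
    (h.continuous_fderiv (by simp))
  unfold Wc wirtinger
  fun_prop

lemma hasDerivAt_rat {z w : ℂ} (hzw : z ≠ w) :
    HasDerivAt (fun ζ : ℂ => ζ * ((ζ + w) / (ζ - w)))
      ((z ^ 2 - 2 * w * z - w ^ 2) / (z - w) ^ 2) z := by
  have h0 : z - w ≠ 0 := sub_ne_zero.2 hzw
  have h := (hasDerivAt_id z).mul
    (((hasDerivAt_id z).add_const w).div ((hasDerivAt_id z).sub_const w) h0)
  refine h.congr_deriv ?_
  simp only [id_eq, Pi.div_apply]
  field_simp
  ring

lemma lemA (hf : ContDiff ℝ (⊤ : ℕ∞) f) {z w : ℂ} (hzw : z ≠ w) :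
    wirtinger (fun ζ => ζ * ((ζ + w) / (ζ - w)) * (f ζ : ℂ)) z = Fk f z w := by
  have hu := hasDerivAt_rat hzw
  have hud : DifferentiableAt ℝ (fun ζ : ℂ => ζ * ((ζ + w) / (ζ - w))) z :=
    (hu.differentiableAt.restrictScalars ℝ)
  have hvd : DifferentiableAt ℝ (fun ζ : ℂ => (f ζ : ℂ)) z :=
    (Complex.ofRealCLM.contDiff.comp hf).differentiable (by simp) z
  rw [wirtinger_mul hud hvd, wirtinger_of_hasDerivAt hu]
  rfl

end MainAux

section LemB

open Complex

variable {f : ℂ → ℝ}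

lemma lemB (hf : ContDiff ℝ (⊤ : ℕ∞) f) (hfc : HasCompactSupport f)
    (hsupp : tsupport f ⊆ unitDisk \ {0}) {w : ℂ} (hw : ‖w‖ = 1) :
    ∫ z in unitDisk, (Fk f z w).re * (-2 * Real.log (‖z‖)) =
      (-2 * Real.pi) * Hstar f w := by
  have hK : IsCompact (tsupport f) := hfc
  have hKlt : ∀ z ∈ tsupport f, ‖z‖ < 1 := by
    intro z hz
    have h1 := (hsupp hz).1
    simpa [unitDisk, Metric.mem_ball, Complex.dist_eq] using h1
  have hK0 : ∀ z ∈ tsupport f, z ≠ 0 := by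
    intro z hz
    have h2 := (hsupp hz).2
    simpa using h2
  have hKw : ∀ z ∈ tsupport f, z ≠ w := by
    intro z hz he
    have h3 := hKlt z hz
    rw [he, hw] at h3
    exact lt_irrefl _ h3
  have hKD : tsupport f ⊆ unitDisk := fun z hz => (hsupp hz).1
  have hfC : ContDiff ℝ (⊤ : ℕ∞) (fun ζ : ℂ => (f ζ : ℂ)) := Complex.ofRealCLM.contDiff.comp hf
  have hfzero : ∀ z, z ∉ tsupport f → f z = 0 := fun z hz => image_eq_zero_of_notMem_tsupport hz
  have hopen : IsOpen (tsupport f)ᶜ := isOpen_compl_iff.2 (isClosed_tsupport f)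
  have hev0 : ∀ z, z ∉ tsupport f → (∀ᶠ ζ in nhds z, f ζ = 0) := by
    intro z hz
    filter_upwards [hopen.mem_nhds hz] with ζ hζ using hfzero ζ hζ
  -- smoothness of the auxiliary function G
  have hGsm : ContDiff ℝ 1 (fun ζ : ℂ => ζ * ((ζ + w) / (ζ - w)) * (f ζ : ℂ) * Lc ζ) := by
    rw [contDiff_iff_contDiffAt]
    intro z
    by_cases hz : z ∈ tsupport f
    · have h0 := hK0 z hz
      have hzw := hKw z hz
      have hrat : ContDiffAt ℂ (⊤ : ℕ∞) (fun ζ : ℂ => ζ * ((ζ + w) / (ζ - w))) z :=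
        contDiffAt_id.mul ((contDiffAt_id.add contDiffAt_const).div
          (contDiffAt_id.sub contDiffAt_const) (sub_ne_zero.2 hzw))
      exact (((hrat.restrict_scalars ℝ).mul hfC.contDiffAt).mul (contDiffAt_Lc h0)).of_le
        (by exact_mod_cast le_top)
    · apply ContDiffAt.congr_of_eventuallyEq (contDiffAt_const (c := (0 : ℂ)))
      filter_upwards [hev0 z hz] with ζ hζ
      simp [hζ]
  have hGc : HasCompactSupport (fun ζ : ℂ => ζ * ((ζ + w) / (ζ - w)) * (f ζ : ℂ) * Lc ζ) := by
    apply HasCompactSupport.intro hK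
    intro z hz
    simp [hfzero z hz]
  have hint0 := integral_wirtinger_eq_zero hGsm hGc
  -- pointwise decomposition of wirtinger G
  have hPQ : ∀ z, wirtinger (fun ζ : ℂ => ζ * ((ζ + w) / (ζ - w)) * (f ζ : ℂ) * Lc ζ) z
      = Fk f z w * Lc z + (1 / 2 : ℂ) * ((z + w) / (z - w)) * (f z : ℂ) := by
    intro z
    by_cases hz : z ∈ tsupport f
    · have h0 := hK0 z hz
      have hzw := hKw z hz
      have hgd : DifferentiableAt ℝ (fun ζ : ℂ => ζ * ((ζ + w) / (ζ - w)) * (f ζ : ℂ)) z :=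
        ((hasDerivAt_rat hzw).differentiableAt.restrictScalars ℝ).mul
          (hfC.differentiable (by simp) z)
      rw [wirtinger_mul (u := fun ζ : ℂ => ζ * ((ζ + w) / (ζ - w)) * (f ζ : ℂ)) (v := Lc)
        hgd (differentiableAt_Lc h0)]
      rw [lemA hf hzw, wirtinger_Lc h0]
      congr 1
      have h2z : (2 : ℂ) * z ≠ 0 := by simp [h0]
      have hzw' : z - w ≠ 0 := sub_ne_zero.2 hzw
      field_simp
    · rw [wirtinger_congr_zero, Fk_zero hz, hfzero z hz]
      · simp
      · filter_upwards [hev0 z hz] with ζ hζ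
        simp [hζ]
  -- continuity and integrability of the two pieces
  have hWcont := Wc_continuous hf
  have hPcont : Continuous (fun z : ℂ => Fk f z w * Lc z) := by
    rw [continuous_iff_continuousAt]
    intro z
    by_cases hz : z ∈ tsupport f
    · have h0 := hK0 z hz
      have hzw' : z - w ≠ 0 := sub_ne_zero.2 (hKw z hz)
      have habs : ‖z‖ ≠ 0 := by simpa using h0
      have hLcont : ContinuousAt Lc z := by
        exact Complex.continuous_ofReal.continuousAt.comp
          ((Real.continuousAt_log habs).comp continuous_norm.continuousAt)
      have c1 : ContinuousAt (fun z : ℂ => (z ^ 2 - 2 * w * z - w ^ 2) / (z - w) ^ 2) z := by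
        exact ContinuousAt.div (f := fun z : ℂ => z ^ 2 - 2 * w * z - w ^ 2)
          (g := fun z : ℂ => (z - w) ^ 2) (by fun_prop) (by fun_prop) (pow_ne_zero 2 hzw')
      have c2 : ContinuousAt (fun z : ℂ => ((f z : ℝ) : ℂ)) z := by
        exact Complex.continuous_ofReal.continuousAt.comp hf.continuous.continuousAt
      have c3 : ContinuousAt (fun z : ℂ => z * ((z + w) / (z - w))) z := by
        exact ContinuousAt.mul continuousAt_id
          (ContinuousAt.div (f := fun z : ℂ => z + w) (g := fun z : ℂ => z - w)
            (by fun_prop) (by fun_prop) hzw')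
      exact (((c1.mul c2).add (c3.mul hWcont.continuousAt)).mul hLcont : _)
    · have hev : (fun ζ : ℂ => Fk f ζ w * Lc ζ) =ᶠ[nhds z] (fun _ => (0 : ℂ)) := by
        filter_upwards [hopen.mem_nhds hz] with ζ hζ
        rw [Fk_zero hζ]
        simp
      exact hev.continuousAt
  have hQcont : Continuous (fun z : ℂ => (1 / 2 : ℂ) * ((z + w) / (z - w)) * (f z : ℂ)) := by
    rw [continuous_iff_continuousAt]
    intro z
    by_cases hz : z ∈ tsupport f
    · have hzw' : z - w ≠ 0 := sub_ne_zero.2 (hKw z hz)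
      exact (continuousAt_const.mul ((continuousAt_id.add continuousAt_const).div
        (continuousAt_id.sub continuousAt_const) hzw')).mul
        (Complex.continuous_ofReal.continuousAt.comp hf.continuous.continuousAt)
    · have hev : (fun ζ : ℂ => (1 / 2 : ℂ) * ((ζ + w) / (ζ - w)) * (f ζ : ℂ)) =ᶠ[nhds z]
          (fun _ => (0 : ℂ)) := by
        filter_upwards [hopen.mem_nhds hz] with ζ hζ
        simp [hfzero ζ hζ]
      exact hev.continuousAt
  have hPsupp : ∀ z, z ∉ tsupport f → Fk f z w * Lc z = 0 := by
    intro z hz; rw [Fk_zero hz]; simp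
  have hQsupp : ∀ z, z ∉ tsupport f → (1 / 2 : ℂ) * ((z + w) / (z - w)) * (f z : ℂ) = 0 := by
    intro z hz; simp [hfzero z hz]
  have hPint : Integrable (fun z : ℂ => Fk f z w * Lc z) volume :=
    hPcont.integrable_of_hasCompactSupport (HasCompactSupport.intro hK hPsupp)
  have hQint : Integrable (fun z : ℂ => (1 / 2 : ℂ) * ((z + w) / (z - w)) * (f z : ℂ)) volume :=
    hQcont.integrable_of_hasCompactSupport (HasCompactSupport.intro hK hQsupp)
  -- split the zero integral
  simp only [hPQ] at hint0
  rw [integral_add hPint hQint] at hint0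
  -- pass to real parts
  have hre : (∫ z : ℂ, Fk f z w * Lc z).re + (∫ z : ℂ, (1 / 2 : ℂ) * ((z + w) / (z - w)) * (f z : ℂ)).re = 0 := by
    rw [← Complex.add_re, hint0]
    rfl
  have hreP : (∫ z : ℂ, Fk f z w * Lc z).re = ∫ z : ℂ, (Fk f z w).re * Real.log (‖z‖) := by
    have h := Complex.reCLM.integral_comp_comm hPint
    simp only [Complex.reCLM_apply] at h
    rw [← h]
    congr 1
    funext z
    simp [Lc, Complex.mul_re]
  have hreQ : (∫ z : ℂ, (1 / 2 : ℂ) * ((z + w) / (z - w)) * (f z : ℂ)).re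
      = ∫ z : ℂ, (1 / 2) * (((z + w) / (z - w)).re * f z) := by
    have h := Complex.reCLM.integral_comp_comm hQint
    simp only [Complex.reCLM_apply] at h
    rw [← h]
    congr 1
    funext z
    simp [Complex.mul_re, Complex.add_re, Complex.mul_im]
    ring
  -- restrict both integrals to the unit disk
  have hsetP : ∫ z in unitDisk, (Fk f z w).re * Real.log (‖z‖)
      = ∫ z : ℂ, (Fk f z w).re * Real.log (‖z‖) := by
    apply setIntegral_eq_integral_of_forall_compl_eq_zero
    intro z hz
    have : z ∉ tsupport f := fun h => hz (hKD h)
    rw [Fk_zero this]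
    simp
  have hsetQ : ∫ z in unitDisk, ((z + w) / (z - w)).re * f z
      = ∫ z : ℂ, ((z + w) / (z - w)).re * f z := by
    apply setIntegral_eq_integral_of_forall_compl_eq_zero
    intro z hz
    have : z ∉ tsupport f := fun h => hz (hKD h)
    simp [hfzero z this]
  -- flip the Poisson kernel
  have hflip : ∫ z in unitDisk, ((z + w) / (z - w)).re * f z
      = - ∫ z in unitDisk, ((w + z) / (w - z)).re * f z := by
    rw [← integral_neg]
    apply setIntegral_congr_fun measurableSet_ball
    intro z hz
    have hlt : ‖z‖ < 1 := by
      simpa [unitDisk, Metric.mem_ball, Complex.dist_eq] using hz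
    have hzw : z ≠ w := by intro he; rw [he, hw] at hlt; exact lt_irrefl _ hlt
    have h1 : z - w ≠ 0 := sub_ne_zero.2 hzw
    have h2 : w - z ≠ 0 := sub_ne_zero.2 (Ne.symm hzw)
    have he : (z + w) / (z - w) = -((w + z) / (w - z)) := by
      field_simp
      ring
    show ((z + w) / (z - w)).re * f z = -(((w + z) / (w - z)).re * f z)
    rw [he]
    simp
  -- put everything together
  have hQhalf : ∫ z : ℂ, (1 / 2) * (((z + w) / (z - w)).re * f z)
      = (1 / 2) * ∫ z : ℂ, ((z + w) / (z - w)).re * f z := MeasureTheory.integral_const_mul _ _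
  have key : ∫ z in unitDisk, (Fk f z w).re * Real.log (‖z‖)
      = - ((1 / 2) * ∫ z in unitDisk, ((z + w) / (z - w)).re * f z) := by
    rw [hsetP, hsetQ]
    rw [hreP, hreQ, hQhalf] at hre
    linarith
  have hπ : Real.pi ≠ 0 := Real.pi_ne_zero
  have hcalc : (fun z : ℂ => (Fk f z w).re * (-2 * Real.log (‖z‖)))
      = fun z : ℂ => (-2 : ℝ) * ((Fk f z w).re * Real.log (‖z‖)) := by
    funext z; ring
  calc ∫ z in unitDisk, (Fk f z w).re * (-2 * Real.log (‖z‖))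
      = ∫ z in unitDisk, (-2 : ℝ) * ((Fk f z w).re * Real.log (‖z‖)) := by rw [hcalc]
    _ = (-2 : ℝ) * ∫ z in unitDisk, (Fk f z w).re * Real.log (‖z‖) :=
        MeasureTheory.integral_const_mul _ _
    _ = (-2 : ℝ) * (- ((1 / 2) * ∫ z in unitDisk, ((z + w) / (z - w)).re * f z)) := by rw [key]
    _ = ∫ z in unitDisk, ((z + w) / (z - w)).re * f z := by ring
    _ = - ∫ z in unitDisk, ((w + z) / (w - z)).re * f z := hflip
    _ = (-2 * Real.pi) * Hstar f w := by
        unfold Hstar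
        field_simp
end LemB

/-- Boundary localization of the logarithmic singularity:
`∫_𝔻 (D_μ f)(z) log|z| dλ(z) = −2π ∫_𝕌 (H*f)(w) dμ(w)`. -/
theorem statement0 (μ : Measure ℂ) [IsFiniteMeasure μ] (hμ : μ unitCircleᶜ = 0)
    (f : ℂ → ℝ) (hf : ContDiff ℝ (⊤ : ℕ∞) f) (hfc : HasCompactSupport f)
    (hsupp : tsupport f ⊆ unitDisk \ {0}) :
    ∫ z in unitDisk, Dmu μ f z * Real.log (‖z‖) =
      (-2 * Real.pi) * ∫ w, Hstar f w ∂μ := by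
  have hK : IsCompact (tsupport f) := hfc
  have hKD : tsupport f ⊆ unitDisk := fun z hz => (hsupp hz).1
  have hμa : ∀ᵐ w ∂μ, w ∈ unitCircle := by
    rw [MeasureTheory.ae_iff]
    exact hμ
  have hWcont := Wc_continuous hf
  have hfzero : ∀ z, z ∉ tsupport f → f z = 0 := fun z hz => image_eq_zero_of_notMem_tsupport hz
  have hDisk : MeasurableSet unitDisk := measurableSet_ball
  -- step 1 : pointwise identity on the disk
  have hstep1 : ∀ z ∈ unitDisk, Dmu μ f z * Real.log (‖z‖)
      = ∫ w, (Fk f z w).re * (-2 * Real.log (‖z‖)) ∂μ := by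
    intro z hz
    have hzlt : ‖z‖ < 1 := by
      simpa [unitDisk, Metric.mem_ball, Complex.dist_eq] using hz
    have hcongr : ∫ w, (wirtinger (fun ζ => ζ * ((ζ + w) / (ζ - w)) * (f ζ : ℂ)) z).re ∂μ
        = ∫ w, (Fk f z w).re ∂μ := by
      apply integral_congr_ae
      filter_upwards [hμa] with w hw
      have hw1 : ‖w‖ = 1 := by
        simpa [unitCircle, Metric.mem_sphere, Complex.dist_eq] using hw
      have hzw : z ≠ w := fun he => by rw [he, hw1] at hzlt; exact lt_irrefl _ hzlt
      rw [lemA hf hzw]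
    unfold Dmu
    rw [hcongr, MeasureTheory.integral_mul_const]
    ring
  have hstep2 : ∫ z in unitDisk, Dmu μ f z * Real.log (‖z‖)
      = ∫ z in unitDisk, ∫ w, (Fk f z w).re * (-2 * Real.log (‖z‖)) ∂μ :=
    setIntegral_congr_fun hDisk hstep1
  -- measurability
  have hWm : Measurable (Wc f) := hWcont.measurable
  have hfm : Measurable f := hf.continuous.measurable
  have hm : Measurable (Function.uncurry
      (fun z w : ℂ => (Fk f z w).re * (-2 * Real.log (‖z‖)))) := by
    unfold Function.uncurry Fk
    apply Measurable.mul
    · apply Complex.measurable_re.comp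
      apply Measurable.add
      · apply Measurable.mul
        · simp only [div_eq_mul_inv]
          exact (by fun_prop : Measurable fun p : ℂ × ℂ =>
            (p.1 ^ 2 - 2 * p.2 * p.1 - p.2 ^ 2)).mul
            ((by fun_prop : Measurable fun p : ℂ × ℂ => (p.1 - p.2) ^ 2).inv)
        · exact Complex.measurable_ofReal.comp (hfm.comp measurable_fst)
      · apply Measurable.mul
        · simp only [div_eq_mul_inv]
          exact (by fun_prop : Measurable fun p : ℂ × ℂ => p.1).mul
            (((by fun_prop : Measurable fun p : ℂ × ℂ => p.1 + p.2)).mul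
              ((by fun_prop : Measurable fun p : ℂ × ℂ => p.1 - p.2).inv))
        · exact hWm.comp measurable_fst
    · exact (measurable_const.mul
        (Real.measurable_log.comp (continuous_norm.measurable.comp measurable_fst)))
  -- continuity on the compact set
  have hcontOn : ContinuousOn (Function.uncurry
      (fun z w : ℂ => (Fk f z w).re * (-2 * Real.log (‖z‖))))
      (tsupport f ×ˢ unitCircle) := by
    intro p hp
    apply ContinuousAt.continuousWithinAt
    have hp1 : p.1 ∈ tsupport f := hp.1
    have hp2 : ‖p.2‖ = 1 := by
      have := hp.2
      simpa [unitCircle, Metric.mem_sphere, Complex.dist_eq] using this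
    have h0 : p.1 ≠ 0 := by
      have := (hsupp hp1).2; simpa using this
    have hlt : ‖p.1‖ < 1 := by
      have := (hsupp hp1).1
      simpa [unitDisk, Metric.mem_ball, Complex.dist_eq] using this
    have hne : p.1 ≠ p.2 := fun he => by rw [he, hp2] at hlt; exact lt_irrefl _ hlt
    have hsub : p.1 - p.2 ≠ 0 := sub_ne_zero.2 hne
    have habs : ‖p.1‖ ≠ 0 := by simpa using h0
    have d1 : ContinuousAt (fun q : ℂ × ℂ => (q.1 ^ 2 - 2 * q.2 * q.1 - q.2 ^ 2) / (q.1 - q.2) ^ 2) p :=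
      ContinuousAt.div (f := fun q : ℂ × ℂ => q.1 ^ 2 - 2 * q.2 * q.1 - q.2 ^ 2)
        (g := fun q : ℂ × ℂ => (q.1 - q.2) ^ 2) (by fun_prop) (by fun_prop) (pow_ne_zero 2 hsub)
    have d2 : ContinuousAt (fun q : ℂ × ℂ => q.1 * ((q.1 + q.2) / (q.1 - q.2))) p :=
      ContinuousAt.mul (by fun_prop)
        (ContinuousAt.div (f := fun q : ℂ × ℂ => q.1 + q.2) (g := fun q : ℂ × ℂ => q.1 - q.2)
          (by fun_prop) (by fun_prop) hsub)
    have dF : ContinuousAt (fun q : ℂ × ℂ => Fk f q.1 q.2) p := by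
      unfold Fk
      exact ((d1.mul ((Complex.continuous_ofReal.comp
        hf.continuous).continuousAt.comp continuousAt_fst)).add
        (d2.mul (hWcont.continuousAt.comp continuousAt_fst)))
    have habs' : ContinuousAt (fun q : ℂ × ℂ => ‖q.1‖) p :=
      (continuous_norm.comp continuous_fst).continuousAt
    have dlog' : ContinuousAt (fun q : ℂ × ℂ => Real.log (‖q.1‖)) p :=
      ContinuousAt.comp (g := Real.log) (f := fun q : ℂ × ℂ => ‖q.1‖) (x := p)
        (Real.continuousAt_log habs) habs'
    have dlog : ContinuousAt (fun q : ℂ × ℂ => -2 * Real.log (‖q.1‖)) p :=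
      continuousAt_const.mul dlog'
    exact (Complex.continuous_re.continuousAt.comp dF).mul dlog
  obtain ⟨C, hC⟩ := (hK.prod (isCompact_sphere (0 : ℂ) 1)).exists_bound_of_continuousOn hcontOn
  -- integrability on the product
  have hzeroΦ : ∀ z w : ℂ, z ∉ tsupport f →
      (Fk f z w).re * (-2 * Real.log (‖z‖)) = 0 := by
    intro z w hz
    rw [Fk_zero hz]
    simp
  have hg0int : Integrable ((tsupport f ×ˢ (Set.univ : Set ℂ)).indicator (fun _ => max C 0))
      ((volume.restrict unitDisk).prod μ) := by
    rw [integrable_indicator_iff ((hK.isClosed.measurableSet).prod MeasurableSet.univ)]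
    apply (integrableOn_const_iff (by simp)).2
    right
    rw [Measure.prod_prod]
    apply ENNReal.mul_lt_top
    · exact lt_of_le_of_lt (le_trans (Measure.restrict_apply_le _ _) (le_refl _))
        hK.measure_lt_top
    · exact measure_lt_top μ _
  have hae2 : ∀ᵐ p ∂((volume.restrict unitDisk).prod μ), p.2 ∈ unitCircle := by
    rw [MeasureTheory.ae_iff]
    have hsub : {p : ℂ × ℂ | ¬ p.2 ∈ unitCircle} ⊆ (Set.univ : Set ℂ) ×ˢ unitCircleᶜ :=
      fun p hp => ⟨Set.mem_univ _, hp⟩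
    have hz : ((volume.restrict unitDisk).prod μ) ((Set.univ : Set ℂ) ×ˢ unitCircleᶜ) = 0 := by
      rw [Measure.prod_prod, hμ]
      simp
    exact measure_mono_null hsub hz
  have hΦint : Integrable (Function.uncurry
      (fun z w : ℂ => (Fk f z w).re * (-2 * Real.log (‖z‖))))
      ((volume.restrict unitDisk).prod μ) := by
    apply Integrable.mono' hg0int hm.aestronglyMeasurable
    filter_upwards [hae2] with p hp
    by_cases hp1 : p.1 ∈ tsupport f
    · have hmem : p ∈ tsupport f ×ˢ (Metric.sphere (0 : ℂ) 1) := Set.mem_prod.2 ⟨hp1, hp⟩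
      have h1 : ‖Function.uncurry (fun z w : ℂ => (Fk f z w).re * (-2 * Real.log (‖z‖))) p‖ ≤ C :=
        hC p hmem
      have h2 : (tsupport f ×ˢ (Set.univ : Set ℂ)).indicator
          (fun _ => max C 0) p = max C 0 :=
        Set.indicator_of_mem (Set.mem_prod.mpr (And.intro hp1 (Set.mem_univ _))) _
      rw [h2]
      exact le_trans h1 (le_max_left _ _)
    · have h2 : (tsupport f ×ˢ (Set.univ : Set ℂ)).indicator
          (fun _ => max C 0) p = 0 :=
        Set.indicator_of_notMem (fun hmem => hp1 hmem.1) _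
      rw [h2, Function.uncurry, hzeroΦ p.1 p.2 hp1]
      simp
  -- Fubini
  have hswap : ∫ z in unitDisk, ∫ w, (Fk f z w).re * (-2 * Real.log (‖z‖)) ∂μ
      = ∫ w, (∫ z in unitDisk, (Fk f z w).re * (-2 * Real.log (‖z‖))) ∂μ :=
    MeasureTheory.integral_integral_swap hΦint
  -- apply the per-w identity
  have hstep3 : ∫ w, (∫ z in unitDisk, (Fk f z w).re * (-2 * Real.log (‖z‖))) ∂μ
      = ∫ w, (-2 * Real.pi) * Hstar f w ∂μ := by
    apply integral_congr_ae
    filter_upwards [hμa] with w hw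
    have hw1 : ‖w‖ = 1 := by
      simpa [unitCircle, Metric.mem_sphere, Complex.dist_eq] using hw
    exact lemB hf hfc hsupp hw1
  rw [hstep2, hswap, hstep3, MeasureTheory.integral_const_mul]
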